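/- arXiv:0812.2473 — 2 statements merged into one kernel-verified Lean document; each statement's English description precedes it below -/
import Mathlib

section
/- Stabilization up to permutation: fix m, an envelope configuration F, and a state X. Suppose the sequence N·X stabilizes at X̃ for some label sequence N ∈ {1,…,m}^ℕ. Then for any label sequence N' ∈ 𝒩_m there exists a permutation π of {1,…,m} such that N'·X stabilizes at π(X̃), where π(X̃) is X̃ with its particle labels permuted by π (positions and types permuted, counters unchanged). -/
/-!
Two active particles at different sites can be fired in either order with the same result. Two
active particles at a common site open its next two envelopes, and the outcome depends only on
which particle opened which envelope, so the two orders agree after exchanging the two labels.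
Hence, if a word `w` stabilizes `X` and `n` is active in `X`, firing `n` first can be completed
by a word shorter than `w` to a relabelling of the same stable state. Passive labels change
nothing, so a fair sequence eventually fires an active particle, and induction on the length of
a stabilizing word gives the theorem.
-/

/-- A state of the activated random walk graphical construction with `m` particles on `ℤ`:
positions, types (`true` = B = active, `false` = A = passive) and envelope counters. -/
structure ARWState (m : ℕ) where
  pos : Fin m → ℤ
  typ : Fin m → Bool
  cnt : ℤ → ℕ

/-- An envelope configuration takes values in `{-1, 0, 1}`:
`±1` is a jump instruction, `0` a sleep instruction. -/
def ValidEnvelopes (F : ℤ → ℕ → ℤ) : Prop :=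
  ∀ z j, F z j = -1 ∨ F z j = 0 ∨ F z j = 1

/-- The action `n · X` of a label `n` on a state `X`. -/
def arwStep {m : ℕ} (F : ℤ → ℕ → ℤ) (n : Fin m) (X : ARWState m) : ARWState m :=
  if X.typ n = false then X
  else
    let z := X.pos n
    let instr := F z (X.cnt z)
    let cnt' : ℤ → ℕ := fun w => if w = z then X.cnt w + 1 else X.cnt w
    if instr = 0 then
      { pos := X.pos
        typ := fun k =>
          if k = n then (if ∃ l, l ≠ n ∧ X.pos l = z then true else false) else X.typ k
        cnt := cnt' }
    else
      let pos' : Fin m → ℤ := fun k => if k = n then z + instr else X.pos k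
      { pos := pos'
        typ := fun k => if pos' k = z + instr then true else X.typ k
        cnt := cnt' }

/-- The evolution `N · X`: `X₀ = X`, `X_{k+1} = n_{k+1} · X_k`. -/
def arwEvolve {m : ℕ} (F : ℤ → ℕ → ℤ) (N : ℕ → Fin m) (X : ARWState m) : ℕ → ARWState m
  | 0 => X
  | k + 1 => arwStep F (N k) (arwEvolve F N X k)

/-- `N · X` stabilizes at `X'`: eventually the sequence is constantly `X'`,
and every particle of `X'` is passive. -/
def StabilizesAt {m : ℕ} (F : ℤ → ℕ → ℤ) (N : ℕ → Fin m) (X X' : ARWState m) : Prop :=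
  (∃ k₀, ∀ k, k₀ ≤ k → arwEvolve F N X k = X') ∧ ∀ n, X'.typ n = false

/-- `𝒩_m`: label sequences in which every label occurs infinitely often. -/
def FairSeq {m : ℕ} (N : ℕ → Fin m) : Prop :=
  ∀ n : Fin m, ∀ k : ℕ, ∃ k', k ≤ k' ∧ N k' = n

/-- Number of jump instructions among the first `c` envelopes at site `z`. -/
def jumpCount (F : ℤ → ℕ → ℤ) (z : ℤ) (c : ℕ) : ℕ :=
  ((Finset.range c).filter (fun j => F z j ≠ 0)).card

/-- The state `π(X)`: particles relabeled by the permutation `π`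
(positions and types permuted, counters unchanged). -/
def permState {m : ℕ} (π : Equiv.Perm (Fin m)) (X : ARWState m) : ARWState m :=
  { pos := fun n => X.pos (π.symm n)
    typ := fun n => X.typ (π.symm n)
    cnt := X.cnt }

theorem exists_ne_eq_iff_or_exists_ne_ne {α β : Type*} {f : α → β} {a : α} (b : α) {c : β} :
    (∃ j ≠ a, f j = c) ↔ (b ≠ a ∧ f b = c) ∨ ∃ j ≠ a, j ≠ b ∧ f j = c := by
  grind

theorem Function.exists_ne_update_eq_iff {α β : Type*} [DecidableEq α] {f : α → β} {a b : α}
    {v c : β} :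
    (∃ j ≠ a, Function.update f b v j = c) ↔ (b ≠ a ∧ v = c) ∨ ∃ j ≠ a, j ≠ b ∧ f j = c := by
  rw [exists_ne_eq_iff_or_exists_ne_ne b, Function.update_self]
  congr! 3 with j
  grind [Function.update_of_ne]

attribute [ext] ARWState

namespace ARWState

variable {m : ℕ}

def IsStable (X : ARWState m) : Prop := ∀ n, X.typ n = false

/-- Particle `n` opens the next envelope at its site and executes instruction `d`: it sleeps
if `d = 0` and jumps by `d` otherwise. -/
def fire (d : ℤ) (n : Fin m) (X : ARWState m) : ARWState m where
  pos := Function.update X.pos n (X.pos n + d)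
  typ k := decide (if k = n then d ≠ 0 ∨ ∃ l ≠ n, X.pos l = X.pos n
    else X.typ k ∨ d ≠ 0 ∧ X.pos k = X.pos n + d)
  cnt := Function.update X.cnt (X.pos n) (X.cnt (X.pos n) + 1)

theorem permState_one (X : ARWState m) : permState 1 X = X := rfl

theorem permState_mul (π ρ : Equiv.Perm (Fin m)) (X : ARWState m) :
    permState (π * ρ) X = permState π (permState ρ X) := rfl

theorem IsStable.permState {X : ARWState m} (h : X.IsStable) (π : Equiv.Perm (Fin m)) :
    (permState π X).IsStable := fun _ => h _

section fire

variable (d : ℤ) {n l : Fin m} {X : ARWState m}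

theorem fire_pos_of_ne (h : l ≠ n) : (fire d n X).pos l = X.pos l := by
  simp [fire, h]

theorem fire_cnt_of_eq {z : ℤ} (h : z = X.pos n) : (fire d n X).cnt z = X.cnt z + 1 := by
  simp [fire, h]

theorem fire_cnt_of_ne {z : ℤ} (h : z ≠ X.pos n) : (fire d n X).cnt z = X.cnt z := by
  simp [fire, h]

theorem fire_typ_of_ne (h : l ≠ n) (hl : X.typ l = true) : (fire d n X).typ l = true := by
  simp [fire, h, hl]

theorem fire_comm_of_pos_ne (e : ℤ) (hpos : X.pos n ≠ X.pos l) :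
    fire e l (fire d n X) = fire d n (fire e l X) := by
  have hnl : n ≠ l := fun h => hpos (h ▸ rfl)
  ext k
  · simp only [fire, Function.update_apply]; grind
  · simp only [fire, decide_eq_decide, Function.exists_ne_update_eq_iff]
    simp only [exists_ne_eq_iff_or_exists_ne_ne l (a := n),
      exists_ne_eq_iff_or_exists_ne_ne n (a := l), Function.update_apply]
    grind
  · simp only [fire, Function.update_apply]; grind

theorem fire_fire_of_pos_eq (e : ℤ) (hnl : n ≠ l) (hpos : X.pos n = X.pos l) :
    fire e l (fire d n X) = permState (Equiv.swap n l) (fire e n (fire d l X)) := by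
  ext k
  · simp only [fire, permState, Function.update_apply, Equiv.symm_swap, Equiv.swap_apply_def]
    grind
  · simp only [fire, permState, decide_eq_decide, Function.exists_ne_update_eq_iff, Equiv.symm_swap]
    simp only [Function.update_apply, Equiv.swap_apply_def]
    grind
  · simp only [fire, permState, Function.update_apply]; grind

theorem fire_permState (ρ : Equiv.Perm (Fin m)) (n : Fin m) (X : ARWState m) :
    fire d (ρ n) (permState ρ X) = permState ρ (fire d n X) := by
  have hsite : (∃ l ≠ ρ n, X.pos (ρ.symm l) = X.pos n) ↔ ∃ l ≠ n, X.pos l = X.pos n :=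
    ⟨fun ⟨l, hl, h⟩ => ⟨ρ.symm l, by rwa [Ne, Equiv.symm_apply_eq], h⟩,
      fun ⟨l, hl, h⟩ => ⟨ρ l, by simpa using hl, by simpa using h⟩⟩
  ext k
  · simp [fire, permState, Function.update_apply, Equiv.symm_apply_eq]
  · simp [fire, permState, Equiv.symm_apply_eq, hsite]
  · simp [fire, permState]

end fire

section arwStep

variable (F : ℤ → ℕ → ℤ) {n l : Fin m} {X : ARWState m}

theorem arwStep_of_typ_false (h : X.typ n = false) : arwStep F n X = X := by
  simp [arwStep, h]

theorem arwStep_of_typ_true (h : X.typ n = true) :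
    arwStep F n X = fire (F (X.pos n) (X.cnt (X.pos n))) n X := by
  rw [arwStep, if_neg (by simp [h])]
  dsimp only
  split_ifs with hd <;> ext k <;> simp only [fire, Function.update_apply, hd] <;> grind

theorem arwStep_typ_of_ne (h : l ≠ n) (hl : X.typ l = true) : (arwStep F n X).typ l = true := by
  cases hn : X.typ n
  · rwa [arwStep_of_typ_false F hn]
  · rw [arwStep_of_typ_true F hn]; exact fire_typ_of_ne _ h hl

theorem arwStep_permState (ρ : Equiv.Perm (Fin m)) (n : Fin m) (X : ARWState m) :
    arwStep F (ρ n) (permState ρ X) = permState ρ (arwStep F n X) := by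
  cases hn : X.typ n
  · rw [arwStep_of_typ_false F hn, arwStep_of_typ_false F (by simpa [permState] using hn)]
  · rw [arwStep_of_typ_true F hn, arwStep_of_typ_true F (by simpa [permState] using hn)]
    simpa [permState] using fire_permState _ ρ n X

theorem arwStep_comm_up_to_perm (hn : X.typ n = true) (hl : X.typ l = true) (hnl : n ≠ l) :
    ∃ ρ : Equiv.Perm (Fin m),
      arwStep F l (arwStep F n X) = permState ρ (arwStep F n (arwStep F l X)) := by
  have hln := hnl.symm
  rw [arwStep_of_typ_true F hn, arwStep_of_typ_true F hl,
    arwStep_of_typ_true F (fire_typ_of_ne _ hln hl),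
    arwStep_of_typ_true F (fire_typ_of_ne _ hnl hn),
    fire_pos_of_ne _ hln, fire_pos_of_ne _ hnl]
  by_cases hpos : X.pos n = X.pos l
  · refine ⟨Equiv.swap n l, ?_⟩
    rw [fire_cnt_of_eq _ hpos.symm, fire_cnt_of_eq _ hpos, ← hpos]
    exact fire_fire_of_pos_eq _ _ hnl hpos
  · refine ⟨1, ?_⟩
    rw [fire_cnt_of_ne _ (Ne.symm hpos), fire_cnt_of_ne _ hpos, permState_one]
    exact fire_comm_of_pos_ne _ _ hpos

end arwStep

end ARWState

section run

variable {m : ℕ} (F : ℤ → ℕ → ℤ)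

def arwRun (w : List (Fin m)) (X : ARWState m) : ARWState m :=
  w.foldl (fun Y n => arwStep F n Y) X

@[simp] theorem arwRun_nil (X : ARWState m) : arwRun F [] X = X := rfl

@[simp] theorem arwRun_cons (n : Fin m) (w : List (Fin m)) (X : ARWState m) :
    arwRun F (n :: w) X = arwRun F w (arwStep F n X) := rfl

theorem arwRun_of_isStable {X : ARWState m} (h : X.IsStable) (w : List (Fin m)) :
    arwRun F w X = X := by
  induction w with
  | nil => rfl
  | cons n w ih => rw [arwRun_cons, ARWState.arwStep_of_typ_false F (h n), ih]

theorem arwRun_map_permState (ρ : Equiv.Perm (Fin m)) (w : List (Fin m)) (X : ARWState m) :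
    arwRun F (w.map ρ) (permState ρ X) = permState ρ (arwRun F w X) := by
  induction w generalizing X with
  | nil => rfl
  | cons n w ih => rw [List.map_cons, arwRun_cons, ARWState.arwStep_permState, ih]; rfl

theorem arwEvolve_eq_arwRun (N : ℕ → Fin m) (X : ARWState m) (k : ℕ) :
    arwEvolve F N X k = arwRun F ((List.range k).map N) X := by
  induction k with
  | zero => rfl
  | succ k ih => simp [arwEvolve, arwRun, ih, List.range_succ]

theorem arwEvolve_add (N : ℕ → Fin m) (X : ARWState m) (a k : ℕ) :
    arwEvolve F N X (a + k) = arwEvolve F (fun i => N (a + i)) (arwEvolve F N X a) k := by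
  induction k with
  | zero => rfl
  | succ k ih => rw [← Nat.add_assoc, arwEvolve, ih]; rfl

theorem arwEvolve_of_forall_typ_false {N : ℕ → Fin m} {X : ARWState m} {k : ℕ}
    (h : ∀ i < k, X.typ (N i) = false) : arwEvolve F N X k = X := by
  induction k with
  | zero => rfl
  | succ k ih =>
    rw [arwEvolve, ih (fun i hi => h i (by omega)),
      ARWState.arwStep_of_typ_false F (h k k.lt_succ_self)]

theorem FairSeq.shift {N : ℕ → Fin m} (h : FairSeq N) (a : ℕ) : FairSeq (fun i => N (a + i)) := by
  intro n k
  obtain ⟨k', hk', rfl⟩ := h n (a + k)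
  exact ⟨k' - a, by omega, by simp only [Nat.add_sub_cancel' (show a ≤ k' by omega)]⟩

theorem FairSeq.exists_first_typ_true {N : ℕ → Fin m} (hN : FairSeq N) {X : ARWState m}
    (hX : ¬X.IsStable) : ∃ k, (∀ i < k, X.typ (N i) = false) ∧ X.typ (N k) = true := by
  have hactive : ∃ k, X.typ (N k) = true := by
    obtain ⟨n, hn⟩ : ∃ n, X.typ n = true := by simpa [ARWState.IsStable] using hX
    obtain ⟨k, -, rfl⟩ := hN n 0
    exact ⟨k, hn⟩
  exact ⟨Nat.find hactive, fun i hi => by simpa using Nat.find_min hactive hi,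
    Nat.find_spec hactive⟩

theorem stabilizesAt_of_isStable {X : ARWState m} (h : X.IsStable) (N : ℕ → Fin m) :
    StabilizesAt F N X X :=
  ⟨⟨0, fun _ _ => arwEvolve_of_forall_typ_false F fun i _ => h (N i)⟩, h⟩

theorem StabilizesAt.of_shift {N : ℕ → Fin m} {X Y : ARWState m} {a : ℕ}
    (h : StabilizesAt F (fun i => N (a + i)) (arwEvolve F N X a) Y) : StabilizesAt F N X Y := by
  obtain ⟨⟨k₀, hk₀⟩, hY⟩ := h
  refine ⟨⟨a + k₀, fun k hk => ?_⟩, hY⟩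
  rw [← Nat.add_sub_cancel' (show a ≤ k by omega), arwEvolve_add]
  exact hk₀ _ (by omega)

theorem exists_arwRun_arwStep_eq_permState {w : List (Fin m)} {X : ARWState m} {n : Fin m}
    (hw : (arwRun F w X).IsStable) (hn : X.typ n = true) :
    ∃ w' : List (Fin m), w'.length < w.length ∧
      ∃ σ : Equiv.Perm (Fin m), arwRun F w' (arwStep F n X) = permState σ (arwRun F w X) := by
  induction w generalizing X with
  | nil => exact absurd (hw n) (by simp [hn])
  | cons l w ih =>
    rcases eq_or_ne l n with rfl | hln
    · exact ⟨w, by simp, 1, rfl⟩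
    cases hl : X.typ l
    · have hX := ARWState.arwStep_of_typ_false F hl
      obtain ⟨v, hv, σ, hσ⟩ := ih (by rwa [arwRun_cons, hX] at hw) hn
      exact ⟨v, by simp; omega, σ, by rw [arwRun_cons, hX, hσ]⟩
    · obtain ⟨v, hv, σ, hσ⟩ := ih hw (ARWState.arwStep_typ_of_ne F (Ne.symm hln) hn)
      obtain ⟨ρ, hρ⟩ := ARWState.arwStep_comm_up_to_perm F hn hl hln.symm
      refine ⟨l :: v.map ρ, by simpa using hv, ρ * σ, ?_⟩
      rw [arwRun_cons, hρ, arwRun_map_permState, hσ, ARWState.permState_mul]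
      rfl

theorem exists_stabilizesAt_permState_arwRun {w : List (Fin m)} {X : ARWState m}
    (hw : (arwRun F w X).IsStable) {N : ℕ → Fin m} (hN : FairSeq N) :
    ∃ σ : Equiv.Perm (Fin m), StabilizesAt F N X (permState σ (arwRun F w X)) := by
  by_cases hX : X.IsStable
  · refine ⟨1, ?_⟩
    rw [ARWState.permState_one, arwRun_of_isStable F hX]
    exact stabilizesAt_of_isStable F hX N
  obtain ⟨k, hpassive, hk⟩ := hN.exists_first_typ_true hX
  obtain ⟨w', hlen, σ, hσ⟩ := exists_arwRun_arwStep_eq_permState F hw hk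
  obtain ⟨τ, hτ⟩ := exists_stabilizesAt_permState_arwRun (hσ ▸ hw.permState σ) (hN.shift (k + 1))
  refine ⟨τ * σ, StabilizesAt.of_shift F (a := k + 1) ?_⟩
  rwa [arwEvolve, arwEvolve_of_forall_typ_false F hpassive, ARWState.permState_mul, ← hσ]
termination_by w.length

end run

theorem arw_stabilization_up_to_permutation_general {m : ℕ} (F : ℤ → ℕ → ℤ)
    (X Xf : ARWState m) (N : ℕ → Fin m) (hstab : StabilizesAt F N X Xf)
    (N' : ℕ → Fin m) (hN' : FairSeq N') :
    ∃ π : Equiv.Perm (Fin m), StabilizesAt F N' X (permState π Xf) := by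
  obtain ⟨⟨k, hk⟩, hXf⟩ := hstab
  have hrun : arwRun F ((List.range k).map N) X = Xf := by
    rw [← arwEvolve_eq_arwRun]; exact hk k le_rfl
  subst hrun
  exact exists_stabilizesAt_permState_arwRun F hXf hN'

/-- **Stabilization up to permutation.** If `N · X` stabilizes at `Xf` for some label
sequence `N`, then for any label sequence `N' ∈ 𝒩_m` there is a permutation `π` of the
particle labels such that `N' · X` stabilizes at `π(Xf)`. -/
theorem arw_stabilization_up_to_permutation {m : ℕ} (F : ℤ → ℕ → ℤ) (hF : ValidEnvelopes F)
    (X Xf : ARWState m) (N : ℕ → Fin m) (hstab : StabilizesAt F N X Xf)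
    (N' : ℕ → Fin m) (hN' : FairSeq N') :
    ∃ π : Equiv.Perm (Fin m), StabilizesAt F N' X (permState π Xf) :=
  arw_stabilization_up_to_permutation_general F X Xf N hstab N' hN'
end

section
/- Monotonicity of the total broken-line weight: let S be a rectangular domain. If ζ° ≤ ζ̃° (entrywise on the boundary edges) and ξ ≤ ξ̃ (pointwise on S), then H_S(ζ°,ξ) ≤ H_S(ζ̃°,ξ̃). -/
/-! Common definitions for the broken line process on the even sublattice
`Z̃² = {(t,x) ∈ ℤ² : t + x even}`. A point is a pair `(t, x)`. -/

/-- A point `(t, x)` of `ℤ²`. -/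
abbrev BLPt := ℤ × ℤ

/-- An edge between diagonal nearest neighbors, encoded by its endpoint of smaller
`x`-coordinate together with a direction: `(y, true)` is the edge from `y = (t,x)` to
`(t+1, x+1)`, and `(y, false)` is the edge from `y` to `(t−1, x+1)`. -/
abbrev BLEdge := BLPt × Bool

namespace BL

/-- The endpoint of an edge with smaller `x`-coordinate. -/
def fstPt (e : BLEdge) : BLPt := e.1

/-- The endpoint of an edge with larger `x`-coordinate. -/
def sndPt (e : BLEdge) : BLPt := (e.1.1 + (if e.2 then 1 else -1), e.1.2 + 1)

/-- The edge `e_y^NE` from `y = (t,x)` to `(t+1, x+1)`. -/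
def eNE (y : BLPt) : BLEdge := (y, true)

/-- The edge `e_y^NW` from `y = (t,x)` to `(t−1, x+1)`. -/
def eNW (y : BLPt) : BLEdge := (y, false)

/-- The edge `e_y^SE` from `y = (t,x)` to `(t+1, x−1)`. -/
def eSE (y : BLPt) : BLEdge := ((y.1 + 1, y.2 - 1), false)

/-- The edge `e_y^SW` from `y = (t,x)` to `(t−1, x−1)`. -/
def eSW (y : BLPt) : BLEdge := ((y.1 - 1, y.2 - 1), true)

/-- A rectangular domain: a nonempty set of the form
`{(t,x) ∈ Z̃² : a ≤ x + t ≤ b, c ≤ x − t ≤ d}`. -/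
def IsRectDomain (S : Set BLPt) : Prop :=
  S.Nonempty ∧ ∃ a b c d : ℤ,
    S = {y | (y.1 + y.2) % 2 = 0 ∧
      a ≤ y.2 + y.1 ∧ y.2 + y.1 ≤ b ∧ c ≤ y.2 - y.1 ∧ y.2 - y.1 ≤ d}

/-- `S̄`: the union of `S` with all points at Euclidean distance `√2` from a point
of `S` (i.e. diagonal nearest neighbors of points of `S`). -/
def bar (S : Set BLPt) : Set BLPt :=
  S ∪ {y | ∃ y' ∈ S, (y.1 - y'.1) ^ 2 = 1 ∧ (y.2 - y'.2) ^ 2 = 1}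

/-- `∂S̄ = S̄ \ S`. -/
def bdry (S : Set BLPt) : Set BLPt := bar S \ S

/-- `ℰ(S̄)`: the edges with at least one endpoint in `S`. -/
def edgeSet (S : Set BLPt) : Set BLEdge := {e | fstPt e ∈ S ∨ sndPt e ∈ S}

/-- A flow field on `ℰ(S̄)`: nonnegative on `ℰ(S̄)` and conservative at every `y ∈ S`:
`η(e_y^SW) + η(e_y^SE) = η(e_y^NW) + η(e_y^NE)`. -/
def IsFlowField (S : Set BLPt) (η : BLEdge → ℝ) : Prop :=
  (∀ e ∈ edgeSet S, 0 ≤ η e) ∧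
  ∀ y ∈ S, η (eSW y) + η (eSE y) = η (eNW y) + η (eNE y)

/-- A broken trace `(y₀, e₁, y₁, …, e_n, y_n)`, `n ≥ 1`, encoded by its list of points:
all points lie in `Z̃²`, and consecutive points satisfy `x_{i} = x_{i−1} + 1`,
`t_i = t_{i−1} ± 1` (the edges are then determined). -/
def IsBrokenTrace (l : List BLPt) : Prop :=
  2 ≤ l.length ∧ (∀ y ∈ l, (y.1 + y.2) % 2 = 0) ∧
  ∀ i : ℕ, ∀ h : i + 1 < l.length,
    (l[i + 1]'h).2 = (l[i]'(Nat.lt_of_succ_lt h)).2 + 1 ∧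
    ((l[i + 1]'h).1 = (l[i]'(Nat.lt_of_succ_lt h)).1 + 1 ∨
      (l[i + 1]'h).1 = (l[i]'(Nat.lt_of_succ_lt h)).1 - 1)

/-- The list of edges `e₁, …, e_n` of a broken trace. -/
def traceEdges (l : List BLPt) : List BLEdge :=
  List.zipWith (fun y y' => ((y, y'.1 == y.1 + 1) : BLEdge)) l l.tail

/-- `ℓ ⊆ S̄`: a broken trace all of whose edges lie in `ℰ(S̄)`. -/
def InBar (S : Set BLPt) (l : List BLPt) : Prop :=
  IsBrokenTrace l ∧ ∀ e ∈ traceEdges l, e ∈ edgeSet S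

/-- `ℓ` crosses `S`: `ℓ ⊆ S̄` and its two extremal points lie in `∂S̄`.
`C(S)` is the set of broken traces crossing `S`. -/
def Crosses (S : Set BLPt) (l : List BLPt) : Prop :=
  InBar S l ∧ (∃ y ∈ bdry S, l.head? = some y) ∧ (∃ y ∈ bdry S, l.getLast? = some y)

/-- `ℓ ⪰ ℓ'` (`ℓ` is to the right of `ℓ'`): `t(x) ≥ t'(x)` for every
`x ∈ D(ℓ) ∩ D(ℓ')`, and `t(x) ≥ t'(x')` for some `x ∈ D(ℓ)`, `x' ∈ D(ℓ')`. -/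
def RightOf (l l' : List BLPt) : Prop :=
  (∀ y ∈ l, ∀ y' ∈ l', y.2 = y'.2 → y'.1 ≤ y.1) ∧
  ∃ y ∈ l, ∃ y' ∈ l', y'.1 ≤ y.1

/-- The birth `ξ_y = min(η(e_y^NE), η(e_y^SE))` of a flow field at `y`. -/
noncomputable def xi (η : BLEdge → ℝ) (y : BLPt) : ℝ := min (η (eNE y)) (η (eSE y))

/-- Association of atoms `(e₁,p₁) ∼ (e₂,p₂)` at a vertex `y ∈ S` (Cases 1–4). -/
def Assoc (S : Set BLPt) (η : BLEdge → ℝ) (e₁ : BLEdge) (p₁ : ℝ) (e₂ : BLEdge) (p₂ : ℝ) :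
    Prop :=
  ∃ y ∈ S,
    (e₁ = eSW y ∧ e₂ = eNW y ∧ 0 < p₁ ∧ p₁ ≤ min (η e₁) (η e₂) ∧ p₂ = p₁) ∨
    (e₁ = eSE y ∧ e₂ = eNW y ∧ η (eSW y) < p₂ ∧ p₂ ≤ η e₂ ∧ p₁ = p₂ - η (eSW y)) ∨
    (e₁ = eSW y ∧ e₂ = eNE y ∧ η (eNW y) < p₁ ∧ p₁ ≤ η e₁ ∧ p₂ = p₁ - η (eNW y)) ∨
    (e₁ = eSE y ∧ e₂ = eNE y ∧ η e₁ - xi η y < p₁ ∧ p₁ ≤ η e₁ ∧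
      η e₂ - xi η y < p₂ ∧ p₂ ≤ η e₂ ∧ η e₁ - p₁ = η e₂ - p₂)

/-- A chain of associated atoms along a list of edges: `ps i` is an atom of the `i`-th
edge and consecutive atoms are associated. -/
def IsChain (S : Set BLPt) (η : BLEdge → ℝ) (es : List BLEdge) (ps : ℕ → ℝ) : Prop :=
  (∀ i : ℕ, ∀ h : i < es.length, 0 < ps i ∧ ps i ≤ η (es[i]'h)) ∧
  ∀ i : ℕ, ∀ h : i + 1 < es.length,
    Assoc S η (es[i]'(Nat.lt_of_succ_lt h)) (ps i) (es[i + 1]'h) (ps (i + 1))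

/-- The set of atoms of the `i`-th edge of `ℓ` that participate in some chain of
associated atoms along `ℓ`. -/
def chainPosSet (S : Set BLPt) (η : BLEdge → ℝ) (l : List BLPt) (i : ℕ) : Set ℝ :=
  {p | ∃ ps : ℕ → ℝ, IsChain S η (traceEdges l) ps ∧ ps i = p}

/-- The weight `w_η(ℓ)` of a broken trace: the common length of the maximal intervals
of atoms participating in chains along `ℓ` (and `0` if there is no such chain). -/
noncomputable def weight (S : Set BLPt) (η : BLEdge → ℝ) (l : List BLPt) : ℝ := by
  classical
  exact if (chainPosSet S η l 0).Nonempty then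
      sSup (chainPosSet S η l 0) - sInf (chainPosSet S η l 0)
    else 0

end BL

namespace BL

/-- An edge of `ℰ(S̄)` joining `y ∈ S` to `y' ∈ ∂S̄` with `t_{y'} = t_y − 1`
(a left-boundary edge, carrying the incoming boundary data `ζ°`). -/
def IsLeftBdryEdge (S : Set BLPt) (e : BLEdge) : Prop :=
  (fstPt e ∈ S ∧ sndPt e ∉ S ∧ (sndPt e).1 < (fstPt e).1) ∨
  (sndPt e ∈ S ∧ fstPt e ∉ S ∧ (fstPt e).1 < (sndPt e).1)

/-- Zero boundary conditions: `η` vanishes on all left-boundary edges. -/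
def ZeroLeftBoundary (S : Set BLPt) (η : BLEdge → ℝ) : Prop :=
  ∀ e : BLEdge, IsLeftBdryEdge S e → η e = 0

/-- The recursion defining the flow field `η(ζ°, ξ)` from the birth field `ξ`:
at every `y ∈ S`, `η(e_y^NE) = ξ_y + (η(e_y^SW) − η(e_y^NW))⁺` and
`η(e_y^SE) = ξ_y + (η(e_y^NW) − η(e_y^SW))⁺`. -/
def BirthRecursion (S : Set BLPt) (η : BLEdge → ℝ) (ξ : BLPt → ℝ) : Prop :=
  ∀ y ∈ S, η (eNE y) = ξ y + max (η (eSW y) - η (eNW y)) 0 ∧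
    η (eSE y) = ξ y + max (η (eNW y) - η (eSW y)) 0

/-- A directed path `π ∈ Π_S`: it stays in `S`, starts at the unique leftmost point
`∂₀S` (minimal `t`), ends at the unique rightmost point `∂₁S` (maximal `t`), and
satisfies `t_{i+1} = t_i + 1`, `x_{i+1} = x_i ± 1`. -/
def IsLppPath (S : Set BLPt) (p : List BLPt) : Prop :=
  p ≠ [] ∧ (∀ y ∈ p, y ∈ S) ∧
  (∀ y, p.head? = some y → ∀ y' ∈ S, y.1 ≤ y'.1) ∧
  (∀ y, p.getLast? = some y → ∀ y' ∈ S, y'.1 ≤ y.1) ∧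
  ∀ i : ℕ, ∀ h : i + 1 < p.length,
    (p[i + 1]'h).1 = (p[i]'(Nat.lt_of_succ_lt h)).1 + 1 ∧
    ((p[i + 1]'h).2 = (p[i]'(Nat.lt_of_succ_lt h)).2 + 1 ∨
      (p[i + 1]'h).2 = (p[i]'(Nat.lt_of_succ_lt h)).2 - 1)

/-- The last passage percolation value `G_S(ξ) = max_{π ∈ Π_S} Σ_{y ∈ π} ξ_y`. -/
noncomputable def lppValue (S : Set BLPt) (ξ : BLPt → ℝ) : ℝ :=
  sSup {v : ℝ | ∃ p : List BLPt, IsLppPath S p ∧ (p.map ξ).sum = v}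

end BL

/-!
The recursion forces the conservation law `η(e_y^SW) + η(e_y^SE) = η(e_y^NW) + η(e_y^NE)`, so
on the rectangle `η` is the discrete gradient of a height function on the faces of the lattice
(the odd points), and the recursion becomes the last-passage recursion
`h(y + (1,0)) = ξ_y + max (h(y + (0,1))) (h(y - (0,1)))`, with boundary values the partial sums
of `ζ°`. The edges counted by `H_S` are crossed by a path of faces from the face left of `S` to
the face right of `S`, so `H_S` telescopes to a last-passage value, which is monotone in `ξ` and
in the boundary data.
-/

namespace BL

def cornerGrowth (ξ : ℕ → ℕ → ℝ) (a b : ℕ → ℝ) : ℕ → ℕ → ℝ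
  | 0, 0 => 0
  | 0, k + 1 => cornerGrowth ξ a b 0 k + a k
  | i + 1, 0 => cornerGrowth ξ a b i 0 + b i
  | i + 1, k + 1 =>
      ξ i k + max (cornerGrowth ξ a b (i + 1) k) (cornerGrowth ξ a b i (k + 1))

theorem cornerGrowth_mono {ξ ξ' : ℕ → ℕ → ℝ} {a a' b b' : ℕ → ℝ} {m n : ℕ}
    (hξ : ∀ i < m, ∀ k < n, ξ i k ≤ ξ' i k) (ha : ∀ k < n, a k ≤ a' k)
    (hb : ∀ i < m, b i ≤ b' i) :
    ∀ i ≤ m, ∀ k ≤ n, cornerGrowth ξ a b i k ≤ cornerGrowth ξ' a' b' i k := by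
  intro i
  induction i with
  | zero =>
    intro _ k hk
    induction k with
    | zero => simp only [cornerGrowth, le_refl]
    | succ k ihk =>
      simp only [cornerGrowth]
      exact add_le_add (ihk (by omega)) (ha k (by omega))
  | succ i ihi =>
    intro hi k hk
    induction k with
    | zero =>
      simp only [cornerGrowth]
      exact add_le_add (ihi (by omega) 0 (by omega)) (hb i (by omega))
    | succ k ihk =>
      simp only [cornerGrowth]
      exact add_le_add (hξ i (by omega) k (by omega))
        (max_le_max (ihk (by omega)) (ihi (by omega) (k + 1) hk))

def rectPt (p : BLPt) (i k : ℕ) : BLPt := (p.1 + i + k, p.2 + i - k)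

def rectSet (p : BLPt) (m n : ℕ) : Set BLPt := {y | ∃ i < m, ∃ k < n, rectPt p i k = y}

theorem rectPt_mem_rectSet {p : BLPt} {m n i k : ℕ} (hi : i < m) (hk : k < n) :
    rectPt p i k ∈ rectSet p m n :=
  ⟨i, hi, k, hk, rfl⟩

theorem eSW_rectPt_succ (p : BLPt) (i k : ℕ) : eSW (rectPt p (i + 1) k) = eNE (rectPt p i k) := by
  simp only [eSW, eNE, rectPt, Prod.mk.injEq, and_true]
  push_cast
  constructor <;> ring

theorem eNW_rectPt_succ (p : BLPt) (i k : ℕ) : eNW (rectPt p i (k + 1)) = eSE (rectPt p i k) := by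
  simp only [eNW, eSE, rectPt, Prod.mk.injEq, and_true]
  push_cast
  constructor <;> ring

/-- `a + a % 2` is the least even number `≥ a` and `d - d % 2` the greatest even number `≤ d`,
so `p` is the leftmost point of `S`. -/
theorem IsRectDomain.exists_eq_rectSet {S : Set BLPt} (hS : IsRectDomain S) :
    ∃ p m n, 0 < m ∧ 0 < n ∧ S = rectSet p m n := by
  obtain ⟨⟨y₀, hy₀⟩, a, b, c, d, rfl⟩ := hS
  obtain ⟨h0, h1, h2, h3, h4⟩ := hy₀
  refine ⟨(((a + a % 2) - (d - d % 2)) / 2, ((a + a % 2) + (d - d % 2)) / 2),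
    ((b - (a + a % 2)) / 2 + 1).toNat, ((d - d % 2 - c) / 2 + 1).toNat, by omega, by omega, ?_⟩
  ext y
  simp only [Set.mem_ofPred_eq, rectSet, rectPt]
  constructor
  · rintro ⟨hy0, hy1, hy2, hy3, hy4⟩
    refine ⟨((y.2 + y.1 - (a + a % 2)) / 2).toNat, by omega,
      ((d - d % 2 - (y.2 - y.1)) / 2).toNat, by omega, ?_⟩
    ext <;> simp only <;> omega
  · rintro ⟨i, hi, k, hk, rfl⟩
    simp only
    omega

@[simp]
theorem sndPt_eSW (y : BLPt) : sndPt (eSW y) = y := by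
  simp [sndPt, eSW]

theorem fstPt_mem_bdry_iff {S : Set BLPt} {e : BLEdge} (he : sndPt e ∈ S) :
    fstPt e ∈ bdry S ↔ fstPt e ∉ S := by
  refine ⟨And.right, fun hout => ⟨Or.inr ⟨sndPt e, he, ?_⟩, hout⟩⟩
  obtain ⟨z, _ | _⟩ := e <;> simp [fstPt, sndPt]

theorem isLeftBdryEdge_eSW_rectPt_zero {p : BLPt} {m n k : ℕ} (hm : 0 < m) (hk : k < n) :
    IsLeftBdryEdge (rectSet p m n) (eSW (rectPt p 0 k)) := by
  refine Or.inr ⟨?_, ?_, ?_⟩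
  · simpa using rectPt_mem_rectSet (p := p) hm hk
  · rintro ⟨i, -, k', -, h⟩
    simp only [fstPt, eSW, rectPt, Prod.mk.injEq] at h
    omega
  · simp [fstPt, sndPt, eSW]

theorem isLeftBdryEdge_eNW_rectPt_zero {p : BLPt} {m n i : ℕ} (hi : i < m) (hn : 0 < n) :
    IsLeftBdryEdge (rectSet p m n) (eNW (rectPt p i 0)) := by
  refine Or.inl ⟨rectPt_mem_rectSet hi hn, ?_, ?_⟩
  · rintro ⟨i', -, k', -, h⟩
    simp [sndPt, eNW, rectPt, Prod.ext_iff] at h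
    omega
  · simp [fstPt, sndPt, eNW]

theorem exists_eq_eSW_or_eNW_of_lowerBdry {p : BLPt} {m n : ℕ} {e : BLEdge}
    (hsnd : sndPt e ∈ rectSet p m n) (hout : fstPt e ∉ rectSet p m n) :
    (∃ k < n, eSW (rectPt p 0 k) = e) ∨ ∃ i < m, eNW (rectPt p i n) = e := by
  obtain ⟨i, hi, k, hk, hik⟩ := hsnd
  obtain ⟨z, _ | _⟩ := e
  · simp [sndPt, rectPt, Prod.ext_iff] at hik
    have hkn : k + 1 = n := by
      by_contra hkn
      refine hout ⟨i, hi, k + 1, by omega, ?_⟩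
      simp only [fstPt, rectPt, Prod.ext_iff]
      push_cast
      omega
    refine Or.inr ⟨i, hi, ?_⟩
    simp only [eNW, rectPt, Prod.ext_iff, and_true]
    omega
  · simp [sndPt, rectPt, Prod.ext_iff] at hik
    have hi0 : i = 0 := by
      by_contra hi0
      refine hout ⟨i - 1, by omega, k, hk, ?_⟩
      simp only [fstPt, rectPt, Prod.ext_iff]
      omega
    refine Or.inl ⟨k, hk, ?_⟩
    simp only [eSW, rectPt, Prod.ext_iff, and_true]
    omega

theorem lowerBdryEdges_rectSet {p : BLPt} {m n : ℕ} (hm : 0 < m) (hn : 0 < n) :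
    {e : BLEdge | sndPt e ∈ rectSet p m n ∧ fstPt e ∈ bdry (rectSet p m n)} =
      (fun k => eSW (rectPt p 0 k)) '' Set.Iio n ∪ (fun i => eNW (rectPt p i n)) '' Set.Iio m := by
  ext e
  simp only [Set.mem_ofPred_eq, Set.mem_union, Set.mem_image, Set.mem_Iio]
  constructor
  · rintro ⟨hsnd, hfst⟩
    exact exists_eq_eSW_or_eNW_of_lowerBdry hsnd ((fstPt_mem_bdry_iff hsnd).1 hfst)
  rintro (⟨k, hk, rfl⟩ | ⟨i, hi, rfl⟩)
  · have hmem : sndPt (eSW (rectPt p 0 k)) ∈ rectSet p m n := by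
      simpa using rectPt_mem_rectSet (p := p) hm hk
    refine ⟨hmem, (fstPt_mem_bdry_iff hmem).2 ?_⟩
    rintro ⟨i', -, k', -, h⟩
    simp only [fstPt, eSW, rectPt, Prod.ext_iff] at h
    omega
  · have hmem : sndPt (eNW (rectPt p i n)) ∈ rectSet p m n := by
      refine ⟨i, hi, n - 1, by omega, ?_⟩
      simp [sndPt, eNW, rectPt, Prod.ext_iff]
      omega
    refine ⟨hmem, (fstPt_mem_bdry_iff hmem).2 ?_⟩
    rintro ⟨i', -, k', hk', h⟩
    simp only [fstPt, eNW, rectPt, Prod.ext_iff] at h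
    omega

theorem finsum_lowerBdryEdges_rectSet {p : BLPt} {m n : ℕ} (hm : 0 < m) (hn : 0 < n)
    (f : BLEdge → ℝ) :
    ∑ᶠ e ∈ {e : BLEdge | sndPt e ∈ rectSet p m n ∧ fstPt e ∈ bdry (rectSet p m n)}, f e =
      ∑ k ∈ Finset.range n, f (eSW (rectPt p 0 k)) +
        ∑ i ∈ Finset.range m, f (eNW (rectPt p i n)) := by
  have hdisj : Disjoint ((fun k => eSW (rectPt p 0 k)) '' Set.Iio n)
      ((fun i => eNW (rectPt p i n)) '' Set.Iio m) := by
    simp [Set.disjoint_left, eSW, eNW]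
  have hinjSW : Set.InjOn (fun k => eSW (rectPt p 0 k)) (Set.Iio n) := by
    intro k _ k' _ h
    simp only [eSW, rectPt, Prod.ext_iff] at h
    omega
  have hinjNW : Set.InjOn (fun i => eNW (rectPt p i n)) (Set.Iio m) := by
    intro i _ i' _ h
    simp only [eNW, rectPt, Prod.ext_iff] at h
    omega
  rw [lowerBdryEdges_rectSet hm hn, finsum_mem_union hdisj ((Set.finite_Iio n).image _)
    ((Set.finite_Iio m).image _), finsum_mem_image hinjSW, finsum_mem_image hinjNW,
    ← Finset.coe_range, ← Finset.coe_range, finsum_mem_coe_finset, finsum_mem_coe_finset]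

/-- The height of the face `rectPt p i k - (1, 0)`, normalised to `0` at `p - (1, 0)`: the flow
through an edge of the grid is the height difference of the two faces it separates. -/
def rectHeight (p : BLPt) (η : BLEdge → ℝ) (ξ : BLPt → ℝ) : ℕ → ℕ → ℝ :=
  cornerGrowth (fun i k => ξ (rectPt p i k)) (fun k => η (eSW (rectPt p 0 k)))
    (fun i => η (eNW (rectPt p i 0)))

theorem max_sub_zero_eq_max_sub {α : Type*} [AddCommGroup α] [LinearOrder α]
    [IsOrderedAddMonoid α] (u d : α) : max (d - u) 0 = max u d - u := by
  rw [← sub_self u, max_sub_sub_right, max_comm]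

namespace BirthRecursion

variable {p : BLPt} {m n : ℕ} {η : BLEdge → ℝ} {ξ : BLPt → ℝ}

theorem rectHeight_step (hrec : BirthRecursion (rectSet p m n) η ξ) {i k : ℕ} (hi : i < m)
    (hk : k < n)
    (hSW : η (eSW (rectPt p i k)) = rectHeight p η ξ i (k + 1) - rectHeight p η ξ i k)
    (hNW : η (eNW (rectPt p i k)) = rectHeight p η ξ (i + 1) k - rectHeight p η ξ i k) :
    η (eNE (rectPt p i k)) = rectHeight p η ξ (i + 1) (k + 1) - rectHeight p η ξ (i + 1) k ∧
      η (eSE (rectPt p i k)) = rectHeight p η ξ (i + 1) (k + 1) - rectHeight p η ξ i (k + 1) := by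
  obtain ⟨hNE, hSE⟩ := hrec _ (rectPt_mem_rectSet hi hk)
  have hR : rectHeight p η ξ (i + 1) (k + 1) = ξ (rectPt p i k) +
      max (rectHeight p η ξ (i + 1) k) (rectHeight p η ξ i (k + 1)) := by
    simp only [rectHeight, cornerGrowth]
  rw [hNE, hSE, hSW, hNW, hR, sub_sub_sub_cancel_right, sub_sub_sub_cancel_right,
    max_sub_zero_eq_max_sub, max_sub_zero_eq_max_sub, max_comm (rectHeight p η ξ i (k + 1))]
  constructor <;> ring

theorem eNE_eSE_eq_rectHeight_sub (hrec : BirthRecursion (rectSet p m n) η ξ) :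
    ∀ i < m, ∀ k < n,
      η (eNE (rectPt p i k)) = rectHeight p η ξ (i + 1) (k + 1) - rectHeight p η ξ (i + 1) k ∧
      η (eSE (rectPt p i k)) = rectHeight p η ξ (i + 1) (k + 1) - rectHeight p η ξ i (k + 1) := by
  intro i
  induction i using Nat.strong_induction_on with
  | _ i ihi =>
    intro hi k
    induction k using Nat.strong_induction_on with
    | _ k ihk =>
      intro hk
      refine hrec.rectHeight_step hi hk ?_ ?_
      · rcases i with _ | i
        · simp only [rectHeight, cornerGrowth, add_sub_cancel_left]
        · rw [eSW_rectPt_succ]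
          exact (ihi i (by omega) (by omega) k hk).1
      · rcases k with _ | k
        · simp only [rectHeight, cornerGrowth, add_sub_cancel_left]
        · rw [eNW_rectPt_succ]
          exact (ihk k (by omega) (by omega)).2

theorem eNW_eq_rectHeight_sub (hrec : BirthRecursion (rectSet p m n) η ξ) {i k : ℕ} (hi : i < m)
    (hk : k ≤ n) : η (eNW (rectPt p i k)) = rectHeight p η ξ (i + 1) k - rectHeight p η ξ i k := by
  rcases k with _ | k
  · simp only [rectHeight, cornerGrowth, add_sub_cancel_left]
  · rw [eNW_rectPt_succ]
    exact (hrec.eNE_eSE_eq_rectHeight_sub i hi k (by omega)).2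

theorem lowerBdry_sum_eq_rectHeight (hrec : BirthRecursion (rectSet p m n) η ξ) :
    ∑ k ∈ Finset.range n, η (eSW (rectPt p 0 k)) + ∑ i ∈ Finset.range m, η (eNW (rectPt p i n)) =
      rectHeight p η ξ m n := by
  have hleft : ∑ k ∈ Finset.range n, η (eSW (rectPt p 0 k)) =
      rectHeight p η ξ 0 n - rectHeight p η ξ 0 0 := by
    rw [← Finset.sum_range_sub]
    simp only [rectHeight, cornerGrowth, add_sub_cancel_left]
  have hright : ∑ i ∈ Finset.range m, η (eNW (rectPt p i n)) =
      rectHeight p η ξ m n - rectHeight p η ξ 0 n := by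
    rw [← Finset.sum_range_sub fun i => rectHeight p η ξ i n]
    exact Finset.sum_congr rfl fun i hi =>
      hrec.eNW_eq_rectHeight_sub (Finset.mem_range.1 hi) le_rfl
  rw [hleft, hright, show rectHeight p η ξ 0 0 = 0 by simp only [rectHeight, cornerGrowth]]
  ring

end BirthRecursion

end BL

open BL in
theorem total_weight_monotone_general (S : Set BLPt) (hS : IsRectDomain S)
    (ξ ξ' : BLPt → ℝ) (η η' : BLEdge → ℝ)
    (hrec : BirthRecursion S η ξ) (hrec' : BirthRecursion S η' ξ')
    (hξle : ∀ y ∈ S, ξ y ≤ ξ' y)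
    (hζle : ∀ e : BLEdge, IsLeftBdryEdge S e → η e ≤ η' e) :
    (∑ᶠ e ∈ {e : BLEdge | sndPt e ∈ S ∧ fstPt e ∈ bdry S}, η e) ≤
      (∑ᶠ e ∈ {e : BLEdge | sndPt e ∈ S ∧ fstPt e ∈ bdry S}, η' e) := by
  obtain ⟨p, m, n, hm, hn, rfl⟩ := hS.exists_eq_rectSet
  rw [finsum_lowerBdryEdges_rectSet hm hn, finsum_lowerBdryEdges_rectSet hm hn,
    hrec.lowerBdry_sum_eq_rectHeight, hrec'.lowerBdry_sum_eq_rectHeight]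
  exact cornerGrowth_mono (fun i hi k hk => hξle _ (rectPt_mem_rectSet hi hk))
    (fun k hk => hζle _ (isLeftBdryEdge_eSW_rectPt_zero hm hk))
    (fun i hi => hζle _ (isLeftBdryEdge_eNW_rectPt_zero hi hn)) m le_rfl n le_rfl

open BL in
/-- **Monotonicity of the total broken-line weight:** if `ζ° ≤ ζ̃°` entrywise on the
left-boundary edges and `ξ ≤ ξ̃` pointwise on `S`, then `H_S(ζ°, ξ) ≤ H_S(ζ̃°, ξ̃)`,
where `η` (resp. `η̃`) is the flow field determined by the boundary data and the birth
recursion, and `H_S` is the total flow through edges `⟨y,y'⟩` with `y ∈ S`, `y' ∈ ∂S̄`,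
`x_{y'} = x_y − 1`. -/
theorem total_weight_monotone (S : Set BLPt) (hS : IsRectDomain S)
    (ξ ξ' : BLPt → ℝ) (η η' : BLEdge → ℝ)
    (hη : IsFlowField S η) (hη' : IsFlowField S η')
    (hrec : BirthRecursion S η ξ) (hrec' : BirthRecursion S η' ξ')
    (hξ0 : ∀ y ∈ S, 0 ≤ ξ y) (hξle : ∀ y ∈ S, ξ y ≤ ξ' y)
    (hζle : ∀ e : BLEdge, IsLeftBdryEdge S e → η e ≤ η' e) :
    (∑ᶠ e ∈ {e : BLEdge | sndPt e ∈ S ∧ fstPt e ∈ bdry S}, η e) ≤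
      (∑ᶠ e ∈ {e : BLEdge | sndPt e ∈ S ∧ fstPt e ∈ bdry S}, η' e) :=
  total_weight_monotone_general S hS ξ ξ' η η' hrec hrec' hξle hζle
end
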